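/- arXiv:0810.1817 — 2 statements merged into one kernel-verified Lean document; each statement's English description precedes it below -/
import Mathlib

section
/- Let h' > 0. Then there exists C > 0 such that for every α ≥ 1 the following holds: if ω : ℂ → ℝ satisfies 0 ≤ ω ≤ 1 on the closed rectangle R_α = {w ∈ ℂ : |Re w| ≤ α, |Im w| ≤ h'}, ω is continuous on R_α except possibly at the four corners, ω is harmonic on the interior of R_α (i.e. C² with vanishing Laplacian, viewing ℂ ≅ ℝ²), ω(w) = 0 for boundary points with |Im w| = h' and |Re w| < α, and ω(w) = 1 for boundary points with |Re w| = α and |Im w| < h', then ω(0) ≥ C · e^{−πα/h'}. -/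
noncomputable section

/-- The horizontal strip `S_m = {w : |Im w| < m/(4π)}`. -/
def Sm (m : ℝ) : Set ℂ := {w : ℂ | |w.im| < m / (4 * Real.pi)}

/-- The set `(ℂ*)^d` of vectors with all coordinates nonzero. -/
def torusPart (d : ℕ) : Set (Fin d → ℂ) := {z | ∀ i, z i ≠ 0}

/-- The multiplicative action of an integer matrix on `(ℂ*)^d`:
`φ_M(z)_i = ∏_j z_j ^ M_{ij}`. -/
def phiM {d : ℕ} (M : Matrix (Fin d) (Fin d) ℤ) (z : Fin d → ℂ) : Fin d → ℂ :=
  fun i => ∏ j, z j ^ (M i j)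

/-- The monomial `z^k = ∏_i z_i ^ k_i` for a row vector `k ∈ ℤ^d`. -/
def zpowVec {d : ℕ} (z : Fin d → ℂ) (k : Fin d → ℤ) : ℂ := ∏ i, z i ^ (k i)

/-- `lam` is a complex eigenvalue of the integer matrix `M`. -/
def IsEig {d : ℕ} (M : Matrix (Fin d) (Fin d) ℤ) (lam : ℂ) : Prop :=
  ((M.map (Int.cast : ℤ → ℂ)).charpoly).IsRoot lam

/-- `ρ(M)`: the max over complex eigenvalues `λ` of `M` of `max |λ| |λ|⁻¹`,
i.e. the max of the spectral radii of `M` and `M⁻¹`. -/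
def rhoM {d : ℕ} (M : Matrix (Fin d) (Fin d) ℤ) : ℝ :=
  sSup {r : ℝ | ∃ lam : ℂ, IsEig M lam ∧ r = max ‖lam‖ ‖lam‖⁻¹}

/-- A Reinhardt domain: a nonempty connected open set stable under coordinatewise
rotations. -/
def IsReinhardt {d : ℕ} (D : Set (Fin d → ℂ)) : Prop :=
  IsOpen D ∧ IsConnected D ∧
    ∀ z ∈ D, ∀ θ : Fin d → ℝ,
      (fun i => Complex.exp ((θ i : ℂ) * Complex.I) * z i) ∈ D

/-- A set `J ⊆ ℤ` has bounded gaps (not bigger than some `l`). -/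
def BddGaps (J : Set ℤ) : Prop :=
  ∃ l : ℕ, ∀ j ∈ J, ∃ j' ∈ J, j' ≠ j ∧ |j - j'| ≤ (l : ℤ)

/-- The Laplacian of `ω : ℂ → ℝ` (viewing `ℂ ≅ ℝ²`) vanishes at each point of `U`:
`∂²ω/∂x² + ∂²ω/∂y² = 0`. -/
def LaplacianZeroOn (ω : ℂ → ℝ) (U : Set ℂ) : Prop :=
  ∀ w ∈ U,
    fderiv ℝ (fun z => fderiv ℝ ω z 1) w 1
      + fderiv ℝ (fun z => fderiv ℝ ω z Complex.I) w Complex.I = 0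

/-!
Compare `ω` with the barrier `h(x + iy) = cosh (a x) cos (b y) / cosh (a α)` on the smaller
rectangle `|x| ≤ α, |y| ≤ π / (2b)`, where `a = π / h'` and `b = 2a/3`, so that `π / (2b) < h'`
keeps the corners of `R_α` away. On the vertical sides `h ≤ 1 = ω`, on the horizontal sides
`h = 0 ≤ ω`, and `Δh = (a² - b²) h > 0` inside. Thus `Δ(ω - h) < 0` inside, which rules out an
interior minimum of `ω - h` (the Hessian is positive semidefinite there), so `ω ≥ h` and
`ω(0) ≥ 1 / cosh (a α) ≥ e^{-πα/h'}`.
-/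

open Filter Topology Laplacian InnerProductSpace

theorem IsLocalMin.deriv_deriv_nonneg {f : ℝ → ℝ} {a : ℝ} (hmin : IsLocalMin f a)
    (hc : ContinuousAt f a) : 0 ≤ deriv (deriv f) a := by
  by_contra! hneg
  have hmax := isLocalMax_of_deriv_deriv_neg hneg hmin.deriv_eq_zero hc
  have hconst : f =ᶠ[𝓝 a] fun _ => f a :=
    (hmin.and hmax).mono fun _ hx => le_antisymm hx.2 hx.1
  simp [hconst.deriv.deriv_eq] at hneg

section NormedSpace

variable {E : Type*} [NormedAddCommGroup E] [NormedSpace ℝ E] {f : E → ℝ} {x : E}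

theorem ContDiffAt.differentiableAt_fderiv_apply (hf : ContDiffAt ℝ 2 f x) (v : E) :
    DifferentiableAt ℝ (fun y => fderiv ℝ f y v) x :=
  ((hf.fderiv_right (m := 1) (by norm_num)).differentiableAt one_ne_zero).clm_apply
    (differentiableAt_const v)

theorem ContDiffAt.fderiv_fderiv_apply_eq_iteratedFDeriv (hf : ContDiffAt ℝ 2 f x) (v : E) :
    fderiv ℝ (fun y => fderiv ℝ f y v) x v = iteratedFDeriv ℝ 2 f x ![v, v] := by
  rw [iteratedFDeriv_two_apply, fderiv_clm_apply
    ((hf.fderiv_right (m := 1) (by norm_num)).differentiableAt one_ne_zero)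
    (differentiableAt_const v)]
  simp

theorem IsLocalMin.fderiv_fderiv_apply_nonneg (hmin : IsLocalMin f x) (hf : ContDiffAt ℝ 2 f x)
    (v : E) : 0 ≤ fderiv ℝ (fun y => fderiv ℝ f y v) x v := by
  have hline : ∀ t : ℝ, HasDerivAt (fun s : ℝ => x + s • v) v t := fun t => by
    simpa using ((hasDerivAt_id t).smul_const v).const_add x
  have hline_tendsto : Tendsto (fun s : ℝ => x + s • v) (𝓝 0) (𝓝 x) := by
    simpa using (hline 0).continuousAt.tendsto
  have hderiv : deriv (fun s : ℝ => f (x + s • v)) =ᶠ[𝓝 0]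
      fun s => fderiv ℝ f (x + s • v) v := by
    filter_upwards [hline_tendsto.eventually (hf.eventually (by simp))] with s hs
    exact ((hs.differentiableAt (by simp)).hasFDerivAt.comp_hasDerivAt s (hline s)).deriv
  have hderiv2 : HasDerivAt (fun s : ℝ => fderiv ℝ f (x + s • v) v)
      (fderiv ℝ (fun y => fderiv ℝ f y v) x v) 0 :=
    (hf.differentiableAt_fderiv_apply v).hasFDerivAt.comp_hasDerivAt_of_eq 0 (hline 0)
      (by simp)
  have hmin_line : IsLocalMin (fun s : ℝ => f (x + s • v)) 0 := by
    simpa [IsLocalMin, IsMinFilter] using hline_tendsto.eventually hmin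
  have hcont : ContinuousAt (fun s : ℝ => f (x + s • v)) 0 :=
    ContinuousAt.comp (by simpa using hf.continuousAt) (hline 0).continuousAt
  simpa [hderiv.deriv_eq, hderiv2.deriv] using hmin_line.deriv_deriv_nonneg hcont

end NormedSpace

section InnerProductSpace

variable {E : Type*} [NormedAddCommGroup E] [InnerProductSpace ℝ E] [FiniteDimensional ℝ E]

theorem IsLocalMin.laplacian_nonneg {f : E → ℝ} {x : E} (hmin : IsLocalMin f x)
    (hf : ContDiffAt ℝ 2 f x) : 0 ≤ Δ f x := by
  rw [laplacian_eq_iteratedFDeriv_stdOrthonormalBasis]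
  refine Finset.sum_nonneg fun i _ => ?_
  rw [← hf.fderiv_fderiv_apply_eq_iteratedFDeriv]
  exact hmin.fderiv_fderiv_apply_nonneg hf _

theorem nonneg_of_laplacian_neg {K U : Set E} (hK : IsCompact K) (hU : IsOpen U) (hUK : U ⊆ K)
    {f : E → ℝ} (hfK : ContinuousOn f K) (hfU : ContDiffOn ℝ 2 f U) (hΔ : ∀ x ∈ U, Δ f x < 0)
    (hbdry : ∀ x ∈ K \ U, 0 ≤ f x) {x : E} (hx : x ∈ K) : 0 ≤ f x := by
  obtain ⟨z, hzK, hzmin⟩ := hK.exists_isMinOn ⟨x, hx⟩ hfK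
  by_cases hzU : z ∈ U
  · have hlocmin : IsLocalMin f z := hzmin.isLocalMin (mem_of_superset (hU.mem_nhds hzU) hUK)
    linarith [hlocmin.laplacian_nonneg (hfU.contDiffAt (hU.mem_nhds hzU)), hΔ z hzU]
  · exact (hbdry z ⟨hzK, hzU⟩).trans (hzmin hx)

end InnerProductSpace

theorem ContDiffAt.laplacian_eq_fderiv_fderiv {f : ℂ → ℝ} {z : ℂ} (hf : ContDiffAt ℝ 2 f z) :
    Δ f z = fderiv ℝ (fun w => fderiv ℝ f w 1) z 1
      + fderiv ℝ (fun w => fderiv ℝ f w Complex.I) z Complex.I := by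
  rw [laplacian_eq_iteratedFDeriv_complexPlane, hf.fderiv_fderiv_apply_eq_iteratedFDeriv,
    hf.fderiv_fderiv_apply_eq_iteratedFDeriv]

theorem LaplacianZeroOn.harmonicOnNhd {f : ℂ → ℝ} {U : Set ℂ} (hΔ : LaplacianZeroOn f U)
    (hU : IsOpen U) (hf : ContDiffOn ℝ 2 f U) : HarmonicOnNhd f U := fun z hz =>
  ⟨hf.contDiffAt (hU.mem_nhds hz), eventually_of_mem (hU.mem_nhds hz) fun w hw => by
    rw [(hf.contDiffAt (hU.mem_nhds hw)).laplacian_eq_fderiv_fderiv, hΔ w hw]; rfl⟩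

section Separable

variable {p q p' q' : ℝ → ℝ}

theorem hasFDerivAt_mul_re_im (hp : ∀ x, HasDerivAt p (p' x) x)
    (hq : ∀ y, HasDerivAt q (q' y) y) (z : ℂ) :
    HasFDerivAt (fun w : ℂ => p w.re * q w.im)
      (p z.re • q' z.im • Complex.imCLM + q z.im • p' z.re • Complex.reCLM) z :=
  ((hp z.re).comp_hasFDerivAt z Complex.reCLM.hasFDerivAt).mul
    ((hq z.im).comp_hasFDerivAt z Complex.imCLM.hasFDerivAt)

theorem fderiv_mul_re_im_one (hp : ∀ x, HasDerivAt p (p' x) x)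
    (hq : ∀ y, HasDerivAt q (q' y) y) :
    (fun z => fderiv ℝ (fun w : ℂ => p w.re * q w.im) z 1) = fun z => p' z.re * q z.im := by
  ext z
  simp [(hasFDerivAt_mul_re_im hp hq z).fderiv, mul_comm]

theorem fderiv_mul_re_im_I (hp : ∀ x, HasDerivAt p (p' x) x)
    (hq : ∀ y, HasDerivAt q (q' y) y) :
    (fun z => fderiv ℝ (fun w : ℂ => p w.re * q w.im) z Complex.I)
      = fun z => p z.re * q' z.im := by
  ext z
  simp [(hasFDerivAt_mul_re_im hp hq z).fderiv]

end Separable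

def coshCos (a b : ℝ) (w : ℂ) : ℝ := Real.cosh (a * w.re) * Real.cos (b * w.im)

section CoshCos

variable {a b : ℝ}

theorem contDiff_coshCos : ContDiff ℝ 2 (coshCos a b) :=
  (Real.contDiff_cosh.comp (contDiff_const.mul Complex.reCLM.contDiff)).mul
    (Real.contDiff_cos.comp (contDiff_const.mul Complex.imCLM.contDiff))

theorem laplacian_coshCos (z : ℂ) : Δ (coshCos a b) z = (a ^ 2 - b ^ 2) * coshCos a b z := by
  have hcosh : ∀ x, HasDerivAt (fun x => Real.cosh (a * x)) (Real.sinh (a * x) * a) x :=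
    fun x => by simpa using ((hasDerivAt_id x).const_mul a).cosh
  have hsinh : ∀ x, HasDerivAt (fun x => Real.sinh (a * x) * a) (Real.cosh (a * x) * a * a) x :=
    fun x => by simpa using ((hasDerivAt_id x).const_mul a).sinh.mul_const a
  have hcos : ∀ y, HasDerivAt (fun y => Real.cos (b * y)) (-Real.sin (b * y) * b) y :=
    fun y => by simpa using ((hasDerivAt_id y).const_mul b).cos
  have hsin : ∀ y, HasDerivAt (fun y => -Real.sin (b * y) * b) (-Real.cos (b * y) * b * b) y :=
    fun y => by simpa using ((hasDerivAt_id y).const_mul b).sin.neg.mul_const b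
  rw [contDiff_coshCos.contDiffAt.laplacian_eq_fderiv_fderiv]
  unfold coshCos
  rw [fderiv_mul_re_im_one hcosh hcos, fderiv_mul_re_im_I hcosh hcos,
    congrFun (fderiv_mul_re_im_one hsinh hcos) z, congrFun (fderiv_mul_re_im_I hcosh hsin) z]
  ring

theorem coshCos_pos (hb : 0 < b) {w : ℂ} (hw : |w.im| < Real.pi / (2 * b)) :
    0 < coshCos a b w := by
  have hbw : |b * w.im| < Real.pi / 2 := by
    rw [abs_mul, abs_of_pos hb]
    calc b * |w.im| < b * (Real.pi / (2 * b)) := by gcongr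
      _ = Real.pi / 2 := by field_simp
  exact mul_pos (Real.cosh_pos _) (Real.cos_pos_of_mem_Ioo (abs_lt.mp hbw))

theorem coshCos_eq_zero (hb : 0 < b) {w : ℂ} (hw : |w.im| = Real.pi / (2 * b)) :
    coshCos a b w = 0 := by
  have hbw : |b * w.im| = Real.pi / 2 := by
    rw [abs_mul, abs_of_pos hb, hw]
    field_simp
  rw [coshCos, ← Real.cos_abs (b * w.im), hbw, Real.cos_pi_div_two, mul_zero]

theorem coshCos_le_cosh (ha : 0 < a) {α : ℝ} {w : ℂ} (hw : |w.re| = α) :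
    coshCos a b w ≤ Real.cosh (a * α) := by
  have hcosh : Real.cosh (a * w.re) = Real.cosh (a * α) := by
    rw [← Real.cosh_abs, abs_mul, abs_of_pos ha, hw]
  rw [coshCos, hcosh]
  exact mul_le_of_le_one_right (Real.cosh_pos _).le (Real.cos_le_one _)

end CoshCos

open Complex in
theorem isCompact_abs_re_le_abs_im_le (α β : ℝ) :
    IsCompact {w : ℂ | |w.re| ≤ α ∧ |w.im| ≤ β} := by
  have hrect : {w : ℂ | |w.re| ≤ α ∧ |w.im| ≤ β} = Set.Icc (-α) α ×ℂ Set.Icc (-β) β := by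
    ext w
    simp [Complex.mem_reProdIm, abs_le]
  rw [hrect]
  exact isCompact_Icc.reProdIm isCompact_Icc

theorem isOpen_abs_re_lt_abs_im_lt (α β : ℝ) :
    IsOpen {w : ℂ | |w.re| < α ∧ |w.im| < β} :=
  (isOpen_lt (continuous_abs.comp Complex.continuous_re) continuous_const).inter
    (isOpen_lt (continuous_abs.comp Complex.continuous_im) continuous_const)

theorem coshCos_div_cosh_le {a b α : ℝ} (hb : 0 < b) (hba : b < a) {ω : ℂ → ℝ}
    (hcont : ContinuousOn ω {w | |w.re| ≤ α ∧ |w.im| ≤ Real.pi / (2 * b)})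
    (hharm : HarmonicOnNhd ω {w | |w.re| < α ∧ |w.im| < Real.pi / (2 * b)})
    (hhor : ∀ w : ℂ, |w.re| ≤ α → |w.im| = Real.pi / (2 * b) → 0 ≤ ω w)
    (hvert : ∀ w : ℂ, |w.re| = α → |w.im| ≤ Real.pi / (2 * b) → 1 ≤ ω w)
    {w : ℂ} (hw : |w.re| ≤ α ∧ |w.im| ≤ Real.pi / (2 * b)) :
    coshCos a b w / Real.cosh (a * α) ≤ ω w := by
  set k := (Real.cosh (a * α))⁻¹
  have hk : 0 < k := inv_pos.mpr (Real.cosh_pos _)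
  have hbarrier : ContDiff ℝ 2 (k • coshCos a b) := contDiff_coshCos.const_smul k
  have hΔ : ∀ z ∈ {w : ℂ | |w.re| < α ∧ |w.im| < Real.pi / (2 * b)},
      Δ (ω - k • coshCos a b) z < 0 := fun z hz => by
    rw [(hharm z hz).1.laplacian_sub hbarrier.contDiffAt,
      laplacian_smul k contDiff_coshCos.contDiffAt, (hharm z hz).2.self_of_nhds,
      laplacian_coshCos]
    have : 0 < a ^ 2 - b ^ 2 := by nlinarith
    have := coshCos_pos (a := a) hb hz.2
    simp only [Pi.zero_apply, smul_eq_mul, zero_sub, neg_neg_iff_pos]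
    positivity
  have hbdry : ∀ z ∈ {w : ℂ | |w.re| ≤ α ∧ |w.im| ≤ Real.pi / (2 * b)} \
      {w | |w.re| < α ∧ |w.im| < Real.pi / (2 * b)}, 0 ≤ (ω - k • coshCos a b) z := by
    rintro z ⟨⟨hre, him⟩, hnot⟩
    simp only [Pi.sub_apply, Pi.smul_apply, smul_eq_mul, sub_nonneg]
    rcases (not_and_or.mp hnot) with hre' | him'
    · have hre_eq : |z.re| = α := le_antisymm hre (not_lt.mp hre')
      calc k * coshCos a b z ≤ k * Real.cosh (a * α) :=
            mul_le_mul_of_nonneg_left (coshCos_le_cosh (hb.trans hba) hre_eq) hk.le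
        _ = 1 := inv_mul_cancel₀ (Real.cosh_pos _).ne'
        _ ≤ ω z := hvert z hre_eq him
    · have him_eq : |z.im| = Real.pi / (2 * b) := le_antisymm him (not_lt.mp him')
      rw [coshCos_eq_zero hb him_eq, mul_zero]
      exact hhor z hre him_eq
  have := nonneg_of_laplacian_neg (isCompact_abs_re_le_abs_im_le _ _)
    (isOpen_abs_re_lt_abs_im_lt _ _) (fun z hz => ⟨hz.1.le, hz.2.le⟩)
    (hcont.sub hbarrier.continuous.continuousOn) (hharm.contDiffOn.sub hbarrier.contDiffOn)
    hΔ hbdry hw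
  simpa [div_eq_inv_mul, sub_nonneg] using this

theorem Real.exp_neg_le_inv_cosh {x : ℝ} (hx : 0 ≤ x) : Real.exp (-x) ≤ (Real.cosh x)⁻¹ := by
  rw [Real.exp_neg]
  refine inv_anti₀ (Real.cosh_pos x) ?_
  rw [← Real.exp_sub_sinh]
  linarith [Real.sinh_nonneg_iff.mpr hx]

/-- Lower bound for the harmonic measure of the vertical sides of the rectangle
`R_α = {|Re w| ≤ α, |Im w| ≤ h'}` at the origin: `ω(0) ≥ C e^{−πα/h'}` with `C`
independent of `α ≥ 1`. -/
theorem stmt_14 (h' : ℝ) (hh' : 0 < h') :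
    ∃ C > (0 : ℝ), ∀ α : ℝ, 1 ≤ α →
      ∀ ω : ℂ → ℝ,
        (∀ w : ℂ, |w.re| ≤ α → |w.im| ≤ h' → 0 ≤ ω w ∧ ω w ≤ 1) →
        ContinuousOn ω ({w : ℂ | |w.re| ≤ α ∧ |w.im| ≤ h'}
          \ {w : ℂ | |w.re| = α ∧ |w.im| = h'}) →
        ContDiffOn ℝ 2 ω {w : ℂ | |w.re| < α ∧ |w.im| < h'} →
        LaplacianZeroOn ω {w : ℂ | |w.re| < α ∧ |w.im| < h'} →
        (∀ w : ℂ, |w.im| = h' → |w.re| < α → ω w = 0) →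
        (∀ w : ℂ, |w.re| = α → |w.im| < h' → ω w = 1) →
        ω 0 ≥ C * Real.exp (-(Real.pi * α) / h') := by
  refine ⟨1, one_pos, fun α hα ω hbnd hcont hC2 hLap _ hside => ?_⟩
  set a := Real.pi / h'
  set b := 2 * Real.pi / (3 * h')
  have hb : 0 < b := by positivity
  have hba : b < a := by
    simp only [a, b]; rw [div_lt_div_iff₀ (by positivity) hh']; nlinarith [Real.pi_pos]
  have hheight : Real.pi / (2 * b) = 3 * h' / 4 := by simp only [b]; field_simp; ring
  have hlt : ∀ w : ℂ, |w.im| ≤ Real.pi / (2 * b) → |w.im| < h' := fun w hw => by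
    rw [hheight] at hw; linarith
  have hharm : HarmonicOnNhd ω {w | |w.re| < α ∧ |w.im| < Real.pi / (2 * b)} :=
    (hLap.harmonicOnNhd (isOpen_abs_re_lt_abs_im_lt _ _) hC2).mono
      fun w hw => ⟨hw.1, hlt w hw.2.le⟩
  have hcont' : ContinuousOn ω {w | |w.re| ≤ α ∧ |w.im| ≤ Real.pi / (2 * b)} :=
    hcont.mono fun w hw => ⟨⟨hw.1, (hlt w hw.2).le⟩, fun hc => (hlt w hw.2).ne hc.2⟩
  have hcompare := coshCos_div_cosh_le hb hba hcont' hharm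
    (fun w hre him => (hbnd w hre (hlt w him.le).le).1)
    (fun w hre him => (hside w hre (hlt w him)).ge) (w := 0)
    ⟨by rw [Complex.zero_re, abs_zero]; linarith, by rw [Complex.zero_im, abs_zero]; positivity⟩
  rw [ge_iff_le]
  calc 1 * Real.exp (-(Real.pi * α) / h') = Real.exp (-(a * α)) := by
        rw [one_mul, neg_div, mul_div_right_comm]
    _ ≤ (Real.cosh (a * α))⁻¹ := Real.exp_neg_le_inv_cosh (by positivity)
    _ = coshCos a b 0 / Real.cosh (a * α) := by simp [coshCos]
    _ ≤ ω 0 := hcompare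
end
end

section
/- Let d ≥ 2 and let M ∈ GL_d(ℤ) with ρ(M) > 1 and characteristic polynomial irreducible over ℚ. Let μ₊ = log(max{|λ| : λ complex eigenvalue of M}) and let k ∈ ℤ^d be any nonzero vector. Then there exist z₊ ∈ (ℂ*)^d, δ > 0, and an infinite set J₊ ⊆ ℕ with bounded gaps such that |z₊^{j.k}| > exp(δ · e^{j μ₊}) for all j ∈ J₊. -/
noncomputable section

/-!
Let `λ` be an eigenvalue of `M` of maximal modulus `R = e^{μ₊}` and `w` an eigenvector. Since the
characteristic polynomial is irreducible over `ℚ`, every nonzero rational row vector is cyclic for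
`M`, so `k ⬝ w ≠ 0` and we may normalise `k ⬝ w = 1`. For `z = exp w` (coordinatewise),
`log |z^{j.k}| = Re (k Mʲ ⬝ w) = Re λʲ = Rʲ cos (j arg λ)`. By Dirichlet's approximation theorem
the `j ≥ 0` with `cos (j arg λ) ≥ 1/2` contain an increasing sequence with bounded gaps, and along
it `|z^{j.k}| ≥ exp (Rʲ / 2)`.
-/

open Real

theorem Real.half_le_cos_of_abs_le {x : ℝ} (h : |x| ≤ π / 3) : 1 / 2 ≤ cos x := by
  rw [← cos_abs, ← cos_pi_div_three]
  exact cos_le_cos_of_nonneg_of_le_pi (abs_nonneg x) (by linarith [pi_pos]) h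

theorem exists_strictMono_half_le_cos_mul_of_abs_le {s : ℝ} (hs : |s| ≤ π / 3) :
    ∃ g : ℕ → ℕ, StrictMono g ∧ (∃ L, ∀ m, g (m + 1) ≤ g m + L) ∧
      ∀ m, 1 / 2 ≤ cos (g m * s) := by
  rcases eq_or_ne s 0 with rfl | hs0
  · exact ⟨id, strictMono_id, ⟨1, fun _ => le_rfl⟩, fun _ => by norm_num⟩
  have hpos : 0 < |s| := abs_pos.mpr hs0
  -- `g m` is the least `g` with `g |s| ≥ 2πm`, so `g m * |s|` lies in `[2πm, 2πm + |s|)`.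
  set g : ℕ → ℕ := fun m => ⌈2 * π * m / |s|⌉₊
  have hle : ∀ m : ℕ, 2 * π * m ≤ g m * |s| := fun m =>
    (div_le_iff₀ hpos).mp (Nat.le_ceil _)
  have hlt : ∀ m : ℕ, g m * |s| < 2 * π * m + |s| := fun m => by
    have := Nat.ceil_lt_add_one (by positivity : 0 ≤ 2 * π * m / |s|)
    calc (g m : ℝ) * |s| < (2 * π * m / |s| + 1) * |s| := by gcongr
      _ = 2 * π * m + |s| := by field_simp
  refine ⟨g, strictMono_nat_of_lt_succ fun m => ?_, ⟨⌈2 * π / |s|⌉₊ + 1, fun m => ?_⟩, fun m => ?_⟩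
  · have h1 := hlt m
    have h2 := hle (m + 1)
    push_cast at h2
    have : (g m : ℝ) < g (m + 1) := lt_of_mul_lt_mul_right (by linarith [pi_pos]) hpos.le
    exact_mod_cast this
  · have h1 := hlt (m + 1)
    have h2 := hle m
    have h3 := (div_le_iff₀ hpos).mp (Nat.le_ceil (2 * π / |s|))
    push_cast at h1
    have : (g (m + 1) : ℝ) < g m + (⌈2 * π / |s|⌉₊ + 1) :=
      lt_of_mul_lt_mul_right (by nlinarith) hpos.le
    exact_mod_cast this.le
  · rw [← cos_abs, abs_mul, Nat.abs_cast, ← cos_sub_nat_mul_two_pi _ m]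
    apply half_le_cos_of_abs_le
    rw [abs_le]
    constructor <;> linarith [hle m, hlt m]

theorem exists_strictMono_half_le_cos_mul (θ : ℝ) :
    ∃ f : ℕ → ℕ, StrictMono f ∧ (∃ L, ∀ m, f (m + 1) ≤ f m + L) ∧
      ∀ m, 1 / 2 ≤ cos (f m * θ) := by
  -- Dirichlet: for some `1 ≤ q ≤ 6`, `q θ` lies within `2π/7` of a multiple of `2π`.
  obtain ⟨q, hq, -, hqθ⟩ := exists_nat_abs_mul_sub_round_le (θ / (2 * π)) (by norm_num : 0 < 6)
  set r := round (q * (θ / (2 * π)))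
  have hs : |q * θ - r * (2 * π)| ≤ π / 3 := by
    have : q * θ - r * (2 * π) = (q * (θ / (2 * π)) - r) * (2 * π) := by field_simp
    rw [this, abs_mul, abs_of_pos (by positivity : (0 : ℝ) < 2 * π)]
    norm_num at hqθ
    nlinarith [pi_pos]
  obtain ⟨g, hg, ⟨L, hL⟩, hcos⟩ := exists_strictMono_half_le_cos_mul_of_abs_le hs
  refine ⟨fun m => q * g m, hg.const_mul hq, ⟨q * L, fun m => ?_⟩, fun m => ?_⟩
  · simpa [mul_add] using Nat.mul_le_mul_left q (hL m)
  · have harg : (g m : ℝ) * (q * θ - r * (2 * π)) =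
        (q * g m : ℕ) * θ - (g m * r : ℤ) * (2 * π) := by
      push_cast; ring
    simpa only [harg, cos_sub_int_mul_two_pi] using hcos m

theorem bddGaps_range_of_strictMono {f : ℕ → ℕ} (hf : StrictMono f) {L : ℕ}
    (hL : ∀ m, f (m + 1) ≤ f m + L) : BddGaps (Set.range fun m => (f m : ℤ)) := by
  refine ⟨L, ?_⟩
  rintro _ ⟨m, rfl⟩
  dsimp only
  have hlt := hf (Nat.lt_add_one m)
  have hgap := hL m
  exact ⟨f (m + 1), ⟨m + 1, rfl⟩, by omega, abs_le.mpr ⟨by omega, by omega⟩⟩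

open Matrix Polynomial

namespace Matrix

variable {n : Type*} [Fintype n] [DecidableEq n] {K : Type*} [Field K]

theorem isUnit_aeval_of_not_charpoly_dvd {A : Matrix n n K} (hA : Irreducible A.charpoly)
    {p : K[X]} (hp : ¬A.charpoly ∣ p) : IsUnit (aeval A p) := by
  obtain ⟨a, b, hab⟩ := hA.coprime_iff_not_dvd.mpr hp
  have h := congrArg (aeval A) hab
  rw [map_add, map_mul, map_mul, aeval_self_charpoly, mul_zero, zero_add, map_one] at h
  exact IsUnit.of_mul_eq_one_right _ h

theorem exists_vecMul_aeval_eq {A : Matrix n n K} (hA : Irreducible A.charpoly) {k : n → K}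
    (hk : k ≠ 0) (y : n → K) : ∃ p : K[X], k ᵥ* aeval A p = y := by
  let φ : degreeLT K (Fintype.card n) →ₗ[K] n → K :=
    { toFun := fun p => k ᵥ* aeval A (p : K[X])
      map_add' := fun p q => by simp [vecMul_add]
      map_smul' := fun c p => by simp [vecMul_smul] }
  have hinj : Function.Injective φ := by
    rw [← LinearMap.ker_eq_bot, LinearMap.ker_eq_bot']
    rintro ⟨p, hpdeg⟩ hp
    refine Subtype.ext ?_
    by_contra hp0
    have hndvd : ¬A.charpoly ∣ p := fun h => by
      have hlt : p.natDegree < Fintype.card n :=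
        (natDegree_lt_iff_degree_lt hp0).mpr (mem_degreeLT.mp hpdeg)
      have hle := natDegree_le_of_dvd h hp0
      rw [charpoly_natDegree_eq_dim] at hle
      omega
    obtain ⟨B, hB⟩ := (isUnit_aeval_of_not_charpoly_dvd hA hndvd).exists_right_inv
    apply hk
    have : k ᵥ* aeval A p = 0 := hp
    rw [← vecMul_one k, ← hB, ← vecMul_vecMul, this, zero_vecMul]
  have hrank : Module.finrank K (degreeLT K (Fintype.card n)) = Module.finrank K (n → K) := by
    rw [(degreeLTEquiv K _).finrank_eq, Module.finrank_fin_fun, Module.finrank_fintype_fun_eq_card]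
  obtain ⟨⟨p, _⟩, hp⟩ := (LinearMap.injective_iff_surjective_of_finrank_eq_finrank hrank).mp hinj y
  exact ⟨p, hp⟩

theorem aeval_mulVec_of_mulVec_eq_smul {R S : Type*} [CommSemiring R] [CommRing S] [Algebra R S]
    {B : Matrix n n S} {μ : S} {u : n → S} (h : B *ᵥ u = μ • u) (p : R[X]) :
    aeval B p *ᵥ u = aeval μ p • u := by
  induction p using Polynomial.induction_on with
  | C a => simp [Algebra.algebraMap_eq_smul_one, smul_mulVec]
  | add p q hp hq => simp [add_mulVec, hp, hq, add_smul]
  | monomial m a ih =>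
    rw [pow_succ, ← mul_assoc, map_mul, aeval_X, ← mulVec_mulVec, h, mulVec_smul, ih, smul_smul,
      map_mul (aeval μ) (C a * X ^ m) X, aeval_X, mul_comm]

theorem dotProduct_ne_zero_of_mulVec_eq_smul {L : Type*} [Field L] [Algebra K L]
    {A : Matrix n n K} (hA : Irreducible A.charpoly) {k : n → K} (hk : k ≠ 0) {μ : L}
    {u : n → L} (hu : u ≠ 0) (h : A.map (algebraMap K L) *ᵥ u = μ • u) :
    (algebraMap K L ∘ k) ⬝ᵥ u ≠ 0 := by
  intro h0
  apply hu
  funext j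
  obtain ⟨p, hp⟩ := exists_vecMul_aeval_eq hA hk (Pi.single j 1)
  have hmap : (aeval A p).map (algebraMap K L) = aeval (A.map (algebraMap K L)) p :=
    (aeval_algHom_apply (AlgHom.mapMatrix (Algebra.ofId K L)) A p).symm
  have hsingle : algebraMap K L ∘ k ᵥ* aeval (A.map (algebraMap K L)) p = Pi.single j 1 := by
    funext i
    rw [← hmap, ← RingHom.map_vecMul, hp]
    by_cases hij : i = j <;> simp [hij]
  calc u j = (algebraMap K L ∘ k ᵥ* aeval (A.map (algebraMap K L)) p) ⬝ᵥ u := by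
        rw [hsingle, single_one_dotProduct]
    _ = 0 := by
      rw [← dotProduct_mulVec, aeval_mulVec_of_mulVec_eq_smul h, dotProduct_smul, h0, smul_zero]

theorem exists_mulVec_eq_smul_of_isRoot_charpoly {A : Matrix n n K} {μ : K}
    (h : A.charpoly.IsRoot μ) : ∃ v ≠ 0, A *ᵥ v = μ • v := by
  rw [← charpoly_toLin', ← Module.End.hasEigenvalue_iff_isRoot_charpoly] at h
  obtain ⟨v, hv⟩ := h.exists_hasEigenvector
  exact ⟨v, hv.2, by simpa using hv.apply_eq_smul⟩

theorem exists_mulVec_eq_smul_dotProduct_eq_one {L : Type*} [Field L] [Algebra K L]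
    {A : Matrix n n K} (hA : Irreducible A.charpoly) {k : n → K} (hk : k ≠ 0) {μ : L}
    (hμ : (A.map (algebraMap K L)).charpoly.IsRoot μ) :
    ∃ w, A.map (algebraMap K L) *ᵥ w = μ • w ∧ (algebraMap K L ∘ k) ⬝ᵥ w = 1 := by
  obtain ⟨u, hu, hAu⟩ := exists_mulVec_eq_smul_of_isRoot_charpoly hμ
  have hc := dotProduct_ne_zero_of_mulVec_eq_smul hA hk hu hAu
  refine ⟨((algebraMap K L ∘ k) ⬝ᵥ u)⁻¹ • u, ?_, ?_⟩
  · rw [mulVec_smul, hAu, smul_comm]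
  · rw [dotProduct_smul, smul_eq_mul, inv_mul_cancel₀ hc]

end Matrix

theorem IsEig.ne_zero {d : ℕ} {M : Matrix (Fin d) (Fin d) ℤ} (hM : IsUnit M.det) {lam : ℂ}
    (h : IsEig M lam) : lam ≠ 0 := by
  rintro rfl
  obtain ⟨v, hv, hMv⟩ := Matrix.exists_mulVec_eq_smul_of_isRoot_charpoly h
  rw [zero_smul] at hMv
  have hdet := Matrix.exists_mulVec_eq_zero_iff.mp ⟨v, hv, hMv⟩
  rw [← Int.cast_det] at hdet
  exact (hM.map (Int.castRingHom ℂ)).ne_zero hdet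

theorem exists_isEig_isGreatest_norm {d : ℕ} (hd : 0 < d) (M : Matrix (Fin d) (Fin d) ℤ) :
    ∃ lam, IsEig M lam ∧ IsGreatest {r : ℝ | ∃ lam, IsEig M lam ∧ r = ‖lam‖} ‖lam‖ := by
  set P := (M.map (Int.cast : ℤ → ℂ)).charpoly
  have hP : P ≠ 0 := (Matrix.charpoly_monic _).ne_zero
  have hroots : ∀ μ, μ ∈ P.roots.toFinset ↔ IsEig M μ := fun μ => by
    rw [Multiset.mem_toFinset, mem_roots hP]; rfl
  obtain ⟨μ0, hμ0⟩ := Complex.exists_root (f := P) (by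
    rw [Matrix.charpoly_degree_eq_dim, Fintype.card_fin]; exact_mod_cast hd)
  obtain ⟨lam, hlam, hmax⟩ := P.roots.toFinset.exists_max_image (‖·‖) ⟨μ0, (hroots μ0).mpr hμ0⟩
  refine ⟨lam, (hroots lam).mp hlam, ⟨lam, (hroots lam).mp hlam, rfl⟩, ?_⟩
  rintro _ ⟨μ, hμ, rfl⟩
  exact hmax μ ((hroots μ).mpr hμ)

theorem Complex.re_pow (z : ℂ) (n : ℕ) : (z ^ n).re = ‖z‖ ^ n * Real.cos (n * z.arg) := by
  conv_lhs => rw [← Complex.norm_mul_exp_arg_mul_I z]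
  rw [mul_pow, ← Complex.exp_nat_mul, ← Complex.ofReal_pow, Complex.re_ofReal_mul,
    ← mul_assoc, ← Complex.ofReal_natCast, ← Complex.ofReal_mul, Complex.exp_ofReal_mul_I_re]

theorem zpowVec_exp {d : ℕ} (w : Fin d → ℂ) (m : Fin d → ℤ) :
    zpowVec (fun i => Complex.exp (w i)) m = Complex.exp ((fun i => (m i : ℂ)) ⬝ᵥ w) := by
  simp only [zpowVec, dotProduct, Complex.exp_sum, Complex.exp_int_mul]

theorem norm_zpowVec_exp_vecMul_pow {d : ℕ} (M : Matrix (Fin d) (Fin d) ℤ) (k : Fin d → ℤ)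
    {μ : ℂ} {w : Fin d → ℂ} (hw : M.map (Int.cast : ℤ → ℂ) *ᵥ w = μ • w)
    (hkw : (fun i => (k i : ℂ)) ⬝ᵥ w = 1) (n : ℕ) :
    ‖zpowVec (fun i => Complex.exp (w i)) (k ᵥ* M ^ n)‖ = Real.exp (μ ^ n).re := by
  have hcast : (fun i => ((k ᵥ* M ^ n) i : ℂ)) =
      (fun i => (k i : ℂ)) ᵥ* (M.map (Int.cast : ℤ → ℂ)) ^ n := by
    funext i
    have h := (Int.castRingHom ℂ).map_vecMul (M ^ n) k i
    rwa [← RingHom.mapMatrix_apply, map_pow] at h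
  have hpow : (M.map (Int.cast : ℤ → ℂ)) ^ n *ᵥ w = μ ^ n • w := by
    simpa using aeval_mulVec_of_mulVec_eq_smul hw (X ^ n : ℂ[X])
  rw [zpowVec_exp, Complex.norm_exp, hcast, ← Matrix.dotProduct_mulVec, hpow, dotProduct_smul, hkw,
    smul_eq_mul, mul_one]

theorem exists_mulVec_eq_smul_dotProduct_eq_one_of_isEig {d : ℕ} {M : Matrix (Fin d) (Fin d) ℤ}
    (hirr : Irreducible (M.charpoly.map (Int.castRingHom ℚ))) {k : Fin d → ℤ} (hk : k ≠ 0)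
    {lam : ℂ} (hlam : IsEig M lam) :
    ∃ w, M.map (Int.cast : ℤ → ℂ) *ᵥ w = lam • w ∧ (fun i => (k i : ℂ)) ⬝ᵥ w = 1 := by
  have hM : (M.map (Int.castRingHom ℚ)).map (algebraMap ℚ ℂ) = M.map (Int.cast : ℤ → ℂ) := by
    rw [Matrix.map_map]
    congr 1
  have hkq : (fun i => (k i : ℚ)) ≠ 0 := fun h =>
    hk (funext fun i => by simpa using congrFun h i)
  have hkc : algebraMap ℚ ℂ ∘ (fun i => (k i : ℚ)) = fun i => (k i : ℂ) := by
    funext i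
    simp
  have := exists_mulVec_eq_smul_dotProduct_eq_one (by rwa [charpoly_map]) hkq
    (show ((M.map (Int.castRingHom ℚ)).map (algebraMap ℚ ℂ)).charpoly.IsRoot lam by rwa [hM])
  rwa [hM, hkc] at this

theorem stmt_17_general (d : ℕ) (M : (Matrix (Fin d) (Fin d) ℤ)ˣ)
    (hirr : Irreducible ((M : Matrix (Fin d) (Fin d) ℤ).charpoly.map (Int.castRingHom ℚ)))
    (μp : ℝ)
    (hμp : μp = Real.log (sSup {r : ℝ | ∃ lam : ℂ,
        IsEig (M : Matrix (Fin d) (Fin d) ℤ) lam ∧ r = ‖lam‖}))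
    (k : Fin d → ℤ) (hk : k ≠ 0) :
    ∃ zp ∈ torusPart d, ∃ δ > (0 : ℝ), ∃ Jp : Set ℤ,
      Jp ⊆ {j : ℤ | 0 ≤ j} ∧ Jp.Infinite ∧ BddGaps Jp ∧
      ∀ j ∈ Jp, ‖zpowVec zp
          (Matrix.vecMul k ((M ^ j : (Matrix (Fin d) (Fin d) ℤ)ˣ) : Matrix (Fin d) (Fin d) ℤ))‖
        > Real.exp (δ * Real.exp ((j : ℝ) * μp)) := by
  have hd : 0 < d := Nat.pos_of_ne_zero fun h => hk (by subst h; exact Subsingleton.elim _ _)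
  obtain ⟨lam, hlam, hgreatest⟩ := exists_isEig_isGreatest_norm hd (M : Matrix (Fin d) (Fin d) ℤ)
  have hR : 0 < ‖lam‖ :=
    norm_pos_iff.mpr (hlam.ne_zero ((Matrix.isUnit_iff_isUnit_det _).mp M.isUnit))
  have hμ : μp = Real.log ‖lam‖ := by rw [hμp, hgreatest.csSup_eq]
  obtain ⟨w, hw, hkw⟩ := exists_mulVec_eq_smul_dotProduct_eq_one_of_isEig hirr hk hlam
  obtain ⟨f, hf, ⟨L, hL⟩, hcos⟩ := exists_strictMono_half_le_cos_mul lam.arg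
  refine ⟨fun i => Complex.exp (w i), fun i => Complex.exp_ne_zero _, 1 / 4, by norm_num,
    Set.range fun m => (f m : ℤ), Set.range_subset_iff.mpr fun m => Int.natCast_nonneg _,
    Set.infinite_range_of_injective (Nat.cast_injective.comp hf.injective),
    bddGaps_range_of_strictMono hf hL, ?_⟩
  rintro _ ⟨m, rfl⟩
  have hRpow : 0 < ‖lam‖ ^ f m := pow_pos hR _
  rw [zpow_natCast, Units.val_pow_eq_pow_val, norm_zpowVec_exp_vecMul_pow _ k hw hkw,
    Complex.re_pow, hμ, Int.cast_natCast, ← Real.log_pow, Real.exp_log hRpow, gt_iff_lt,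
    Real.exp_lt_exp]
  nlinarith [hcos m]

/-- For `M ∈ GL_d(ℤ)` with `ρ(M) > 1` and irreducible characteristic polynomial, and any
nonzero `k ∈ ℤ^d`, there are `z₊ ∈ (ℂ*)^d`, `δ > 0` and an infinite `J₊ ⊆ ℤ_{≥0}` with
bounded gaps such that `|z₊^{j.k}| > exp(δ e^{jμ₊})` for all `j ∈ J₊`. -/
theorem stmt_17 (d : ℕ) (hd : 2 ≤ d) (M : (Matrix (Fin d) (Fin d) ℤ)ˣ)
    (hrho : 1 < rhoM (M : Matrix (Fin d) (Fin d) ℤ))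
    (hirr : Irreducible ((M : Matrix (Fin d) (Fin d) ℤ).charpoly.map (Int.castRingHom ℚ)))
    (μp : ℝ)
    (hμp : μp = Real.log (sSup {r : ℝ | ∃ lam : ℂ,
        IsEig (M : Matrix (Fin d) (Fin d) ℤ) lam ∧ r = ‖lam‖}))
    (k : Fin d → ℤ) (hk : k ≠ 0) :
    ∃ zp ∈ torusPart d, ∃ δ > (0 : ℝ), ∃ Jp : Set ℤ,
      Jp ⊆ {j : ℤ | 0 ≤ j} ∧ Jp.Infinite ∧ BddGaps Jp ∧
      ∀ j ∈ Jp, ‖zpowVec zp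
          (Matrix.vecMul k ((M ^ j : (Matrix (Fin d) (Fin d) ℤ)ˣ) : Matrix (Fin d) (Fin d) ℤ))‖
        > Real.exp (δ * Real.exp ((j : ℝ) * μp)) :=
  stmt_17_general d M hirr μp hμp k hk
end
end
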